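/- arXiv:2605.21978 — 3 statements merged into one kernel-verified Lean document; each statement's English description precedes it below -/
import Mathlib

section
/- Let λ, θ, γ be real with λ ≠ 1, and let Λ = cos θ · (1 + γ(1 − 2λ)). Let (φₙ) be a sequence of positive reals and define a sequence (Aₙ) by A₁ = (1 − 2λ)Λ / ((1 − λ)φ₁) and A_{n+1} = (2Λ / ((n+2)(1 − λ)φ_{n+1})) · (1 − 2λ + Σ_{k=1}^{n} φₖ(1 − λ + kλ)Aₖ). Then for all n ≥ 2, Aₙ = ((1 − 2λ)Λ / ((1 − λ)ⁿ φₙ)) · ∏_{k=1}^{n−1} ((k+1)(1 − λ) + 2(1 − λ + kλ)Λ)/(k+2). -/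
/-!
Write `Sₙ = 1 - 2λ + ∑_{k=1}^{n} φₖ (1 - λ + kλ) Aₖ`, so that the recurrence reads
`A_{n+1} = 2Λ Sₙ / ((n+2)(1-λ) φ_{n+1})`; the initial value `A₁` is exactly the case `n = 0` of
this formula. Substituting it into `S_{n+1} = Sₙ + φ_{n+1} (1 - λ + (n+1)λ) A_{n+1}` cancels
`φ_{n+1}` and makes `Sₙ` a product of explicit factors, which gives `Aₙ` in closed form.
-/

open Finset

namespace WeightedRecurrence

noncomputable def weightedSum (lam : ℝ) (phi A : ℕ → ℝ) (n : ℕ) : ℝ :=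
  (1 - 2 * lam) + ∑ k ∈ Icc 1 n, phi k * (1 - lam + (k : ℝ) * lam) * A k

noncomputable def growthFactor (lam Lam : ℝ) (k : ℕ) : ℝ :=
  (((k : ℝ) + 1) * (1 - lam) + 2 * (1 - lam + (k : ℝ) * lam) * Lam) / ((k : ℝ) + 2)

variable {lam Lam : ℝ} {phi A : ℕ → ℝ}

theorem weightedSum_zero : weightedSum lam phi A 0 = 1 - 2 * lam := by
  simp [weightedSum]

theorem weightedSum_succ (n : ℕ) :
    weightedSum lam phi A (n + 1) =
      weightedSum lam phi A n + phi (n + 1) * (1 - lam + ((n + 1 : ℕ) : ℝ) * lam) * A (n + 1) := by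
  rw [weightedSum, weightedSum, sum_Icc_succ_top (by omega), add_assoc]

theorem succ_eq_mul_weightedSum (hlam : lam ≠ 1) (hphi : ∀ n, phi n ≠ 0)
    (hA1 : A 1 = (1 - 2 * lam) * Lam / ((1 - lam) * phi 1))
    (hrec : ∀ n : ℕ, 1 ≤ n →
      A (n + 1) = (2 * Lam / (((n : ℝ) + 2) * (1 - lam) * phi (n + 1))) *
        ((1 - 2 * lam) + ∑ k ∈ Icc 1 n, phi k * (1 - lam + (k : ℝ) * lam) * A k))
    (n : ℕ) :
    A (n + 1) = 2 * Lam / (((n : ℝ) + 2) * (1 - lam) * phi (n + 1)) * weightedSum lam phi A n := by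
  rcases Nat.eq_zero_or_pos n with rfl | hn
  · have : 1 - lam ≠ 0 := sub_ne_zero.mpr hlam.symm
    rw [weightedSum_zero, zero_add, hA1]
    field_simp [hphi 1]
    ring
  · exact hrec n hn

theorem weightedSum_eq_prod (hlam : lam ≠ 1) (hphi : ∀ n, phi n ≠ 0)
    (hA : ∀ n : ℕ, A (n + 1) =
      2 * Lam / (((n : ℝ) + 2) * (1 - lam) * phi (n + 1)) * weightedSum lam phi A n)
    (n : ℕ) :
    weightedSum lam phi A n =
      (1 - 2 * lam) * (((n : ℝ) + 2) / 2) * (∏ k ∈ Icc 1 n, growthFactor lam Lam k) /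
        (1 - lam) ^ n := by
  have h1 : 1 - lam ≠ 0 := sub_ne_zero.mpr hlam.symm
  induction n with
  | zero => simp [weightedSum_zero]
  | succ n ih =>
    rw [weightedSum_succ, hA, ih, prod_Icc_succ_top (by omega), growthFactor]
    have : ((n : ℝ) + 2) ≠ 0 := by positivity
    push_cast
    field_simp [hphi (n + 1)]
    ring

end WeightedRecurrence

open WeightedRecurrence in
theorem stmt_0_general (lam Lam : ℝ) (hlam : lam ≠ 1)
    (phi : ℕ → ℝ) (hphi : ∀ n, 0 < phi n)
    (A : ℕ → ℝ)
    (hA1 : A 1 = (1 - 2 * lam) * Lam / ((1 - lam) * phi 1))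
    (hrec : ∀ n : ℕ, 1 ≤ n →
      A (n + 1) = (2 * Lam / (((n : ℝ) + 2) * (1 - lam) * phi (n + 1))) *
        ((1 - 2 * lam) + ∑ k ∈ Finset.Icc 1 n, phi k * (1 - lam + (k : ℝ) * lam) * A k)) :
    ∀ n : ℕ, 2 ≤ n →
      A n = ((1 - 2 * lam) * Lam / ((1 - lam) ^ n * phi n)) *
        ∏ k ∈ Finset.Icc 1 (n - 1),
          (((k : ℝ) + 1) * (1 - lam) + 2 * (1 - lam + (k : ℝ) * lam) * Lam) / ((k : ℝ) + 2) := by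
  have hphi' : ∀ n, phi n ≠ 0 := fun n => (hphi n).ne'
  have hA := succ_eq_mul_weightedSum hlam hphi' hA1 hrec
  intro n hn
  obtain ⟨n, rfl⟩ : ∃ m, n = m + 1 := ⟨n - 1, by omega⟩
  have h1 : 1 - lam ≠ 0 := sub_ne_zero.mpr hlam.symm
  have : ((n : ℝ) + 2) ≠ 0 := by positivity
  change A (n + 1) = _ * ∏ k ∈ Icc 1 (n + 1 - 1), growthFactor lam Lam k
  rw [hA, weightedSum_eq_prod hlam hphi' hA, Nat.add_sub_cancel]
  field_simp [hphi' (n + 1)]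
  ring

theorem stmt_0 (lam theta gam Lam : ℝ) (hlam : lam ≠ 1)
    (hLam : Lam = Real.cos theta * (1 + gam * (1 - 2 * lam)))
    (phi : ℕ → ℝ) (hphi : ∀ n, 0 < phi n)
    (A : ℕ → ℝ)
    (hA1 : A 1 = (1 - 2 * lam) * Lam / ((1 - lam) * phi 1))
    (hrec : ∀ n : ℕ, 1 ≤ n →
      A (n + 1) = (2 * Lam / (((n : ℝ) + 2) * (1 - lam) * phi (n + 1))) *
        ((1 - 2 * lam) + ∑ k ∈ Finset.Icc 1 n, phi k * (1 - lam + (k : ℝ) * lam) * A k)) :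
    ∀ n : ℕ, 2 ≤ n →
      A n = ((1 - 2 * lam) * Lam / ((1 - lam) ^ n * phi n)) *
        ∏ k ∈ Finset.Icc 1 (n - 1),
          (((k : ℝ) + 1) * (1 - lam) + 2 * (1 - lam + (k : ℝ) * lam) * Lam) / ((k : ℝ) + 2) :=
  stmt_0_general lam Lam hlam phi hphi A hA1 hrec
end

section
/- Let H(z) = 1/z + Σ_{n≥1} cₙ zⁿ be analytic on the punctured unit disk with Σ_{n≥1} |cₙ| r^{n+1} < 1 for some 0 < r < 1, and let 0 ≤ ρ < 1. If Σ_{n≥1} (n+2−ρ)|cₙ| r^{n+1} ≤ 1 − ρ, then for all z with 0 < |z| < r, |z H'(z)/H(z) + 1| ≤ 1 − ρ. -/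
/-!
Multiplying by `z` removes the pole: `z H(z) = 1 + Σ cₙ z^(n+1)` and
`z (z H'(z) + H(z)) = Σ (n+1) cₙ z^(n+1)`. With `s = |z|`, `A = Σ |cₙ| s^(n+1) < 1` and
`B = Σ (n+1) |cₙ| s^(n+1)` this gives `|z H'/H + 1| ≤ B / (1 - A)`. The coefficient condition says
`B + (1 - ρ) A ≤ 1 - ρ` at `s = r`, and both sums only decrease when `r` is replaced by `s < r`.
-/

open Filter Topology

section RealSeries

variable {f : ℕ → ℝ} {r s : ℝ} {k : ℕ}

theorem Summable.mul_pow_of_le (h : Summable fun n => f n * r ^ (n + k)) (hf : ∀ n, 0 ≤ f n)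
    (hs : 0 ≤ s) (hsr : s ≤ r) : Summable fun n => f n * s ^ (n + k) :=
  h.of_nonneg_of_le (fun n => mul_nonneg (hf n) (pow_nonneg hs _))
    fun n => mul_le_mul_of_nonneg_left (pow_le_pow_left₀ hs hsr _) (hf n)

theorem tsum_mul_pow_le_of_le (h : Summable fun n => f n * r ^ (n + k)) (hf : ∀ n, 0 ≤ f n)
    (hs : 0 ≤ s) (hsr : s ≤ r) : ∑' n, f n * s ^ (n + k) ≤ ∑' n, f n * r ^ (n + k) :=
  (h.mul_pow_of_le hf hs hsr).tsum_le_tsum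
    (fun n => mul_le_mul_of_nonneg_left (pow_le_pow_left₀ hs hsr _) (hf n)) h

theorem Summable.of_natCast_add_two_mul (h : Summable fun n : ℕ => ((n : ℝ) + 2) * f n * r ^ (n + k))
    (hf : ∀ n, 0 ≤ f n) (hr : 0 ≤ r) : Summable fun n => f n * r ^ (n + k) :=
  h.of_nonneg_of_le (fun n => mul_nonneg (hf n) (pow_nonneg hr _)) fun n => by
    rw [mul_assoc]
    exact le_mul_of_one_le_left (mul_nonneg (hf n) (pow_nonneg hr _))
      (by linarith [n.cast_nonneg (α := ℝ)])

end RealSeries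

theorem norm_div_one_add_le {K : Type*} [NormedField K] {u v : K} {A B : ℝ} (hu : ‖u‖ ≤ B)
    (hv : ‖v‖ ≤ A) (hA : A < 1) : ‖u / (1 + v)‖ ≤ B / (1 - A) := by
  have hden : 1 - A ≤ ‖1 + v‖ := by linarith [norm_sub_le_norm_add (1 : K) v, norm_one (α := K)]
  rw [norm_div]
  exact div_le_div₀ ((norm_nonneg u).trans hu) hu (sub_pos.2 hA) hden

section PowerSeries

variable {𝕜 : Type*} [RCLike 𝕜] {b : ℕ → 𝕜} {r : ℝ} {z : 𝕜}

theorem summable_mul_pow_of_norm_le {f : ℕ → 𝕜} {g : ℕ → ℝ} (hg : Summable fun n => g n * r ^ n)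
    (hf : ∀ n, ‖f n‖ ≤ g n) (hz : ‖z‖ ≤ r) : Summable fun n => f n * z ^ n := by
  refine .of_norm_bounded hg fun n => ?_
  rw [norm_mul, norm_pow]
  exact mul_le_mul (hf n) (pow_le_pow_left₀ (norm_nonneg z) hz n) (by positivity)
    ((norm_nonneg _).trans (hf n))

theorem hasDerivAt_tsum_mul_pow_succ (hb : Summable fun n : ℕ => ((n : ℝ) + 1) * ‖b n‖ * r ^ n)
    (hz : ‖z‖ < r) :
    HasDerivAt (fun x => ∑' n, b n * x ^ (n + 1)) (∑' n : ℕ, ((n : 𝕜) + 1) * b n * z ^ n) z := by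
  have hr : 0 < r := (norm_nonneg z).trans_lt hz
  refine hasDerivAt_tsum_of_isPreconnected (g := fun n x => b n * x ^ (n + 1))
    (g' := fun n x => ((n : 𝕜) + 1) * b n * x ^ n) hb
    Metric.isOpen_ball (convex_ball (0 : 𝕜) r).isPreconnected (fun n y _ => ?_)
    (fun n y hy => ?_) (Metric.mem_ball_self hr) (by simp) (mem_ball_zero_iff.2 hz)
  · simpa [mul_comm, mul_left_comm, mul_assoc] using (hasDerivAt_pow (n + 1) y).const_mul (b n)
  · have hn : ‖(n : 𝕜) + 1‖ = (n : ℝ) + 1 := by norm_cast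
    rw [norm_mul, norm_mul, norm_pow, hn]
    exact mul_le_mul_of_nonneg_left
      (pow_le_pow_left₀ (norm_nonneg y) (mem_ball_zero_iff.1 hy).le n) (by positivity)

theorem mul_deriv_add_eq_tsum {H : 𝕜 → 𝕜}
    (hb : Summable fun n : ℕ => ((n : ℝ) + 1) * ‖b n‖ * r ^ n) (hz : z ≠ 0) (hzr : ‖z‖ < r)
    (hH : H =ᶠ[𝓝 z] fun x => x⁻¹ + ∑' n, b n * x ^ (n + 1)) :
    z * deriv H z + H z = ∑' n : ℕ, ((n : 𝕜) + 2) * b n * z ^ (n + 1) := by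
  have hderiv : deriv H z = -(z ^ 2)⁻¹ + ∑' n : ℕ, ((n : 𝕜) + 1) * b n * z ^ n := by
    rw [hH.deriv_eq]
    exact ((hasDerivAt_inv hz).add (hasDerivAt_tsum_mul_pow_succ hb hzr)).deriv
  have hT' : Summable fun n : ℕ => ((n : 𝕜) + 1) * b n * z ^ n :=
    summable_mul_pow_of_norm_le hb (fun n => by rw [norm_mul]; norm_cast) hzr.le
  have hT : Summable fun n : ℕ => b n * z ^ n :=
    summable_mul_pow_of_norm_le hb
      (fun n => le_mul_of_one_le_left (norm_nonneg _) (by linarith [n.cast_nonneg (α := ℝ)]))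
      hzr.le
  calc z * deriv H z + H z
      = z * ∑' n : ℕ, ((n : 𝕜) + 1) * b n * z ^ n + ∑' n : ℕ, b n * z ^ (n + 1) := by
        rw [hderiv, hH.eq_of_nhds]
        field_simp
        ring
    _ = ∑' n : ℕ, (z * (((n : 𝕜) + 1) * b n * z ^ n) + b n * z ^ n * z) := by
        rw [(hT'.mul_left z).tsum_add (hT.mul_right z), tsum_mul_left, tsum_mul_right,
          ← tsum_mul_right]
        exact congrArg _ (tsum_congr fun n => by ring)
    _ = ∑' n : ℕ, ((n : 𝕜) + 2) * b n * z ^ (n + 1) := tsum_congr fun n => by ring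

theorem norm_mul_deriv_div_add_one_le {H : 𝕜 → 𝕜}
    (hb : Summable fun n : ℕ => ((n : ℝ) + 2) * ‖b n‖ * r ^ (n + 2)) (hz : z ≠ 0)
    (hzr : ‖z‖ < r) (hH : H =ᶠ[𝓝 z] fun x => x⁻¹ + ∑' n, b n * x ^ (n + 1))
    (hA : ∑' n : ℕ, ‖b n‖ * ‖z‖ ^ (n + 2) < 1) :
    ‖z * deriv H z / H z + 1‖ ≤
      (∑' n : ℕ, ((n : ℝ) + 2) * ‖b n‖ * ‖z‖ ^ (n + 2)) /
        (1 - ∑' n : ℕ, ‖b n‖ * ‖z‖ ^ (n + 2)) := by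
  have hr : 0 < r := (norm_nonneg z).trans_lt hzr
  have hb' : Summable fun n : ℕ => ((n : ℝ) + 1) * ‖b n‖ * r ^ n := by
    refine (hb.mul_left (r ^ 2)⁻¹).of_nonneg_of_le (fun n => by positivity) fun n => ?_
    have hshift : (r ^ 2)⁻¹ * (((n : ℝ) + 2) * ‖b n‖ * r ^ (n + 2)) =
        ((n : ℝ) + 2) * ‖b n‖ * r ^ n := by
      rw [pow_add]
      field_simp
    rw [hshift]
    gcongr
    linarith
  have hBz : Summable fun n : ℕ => ((n : ℝ) + 2) * ‖b n‖ * ‖z‖ ^ (n + 2) :=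
    hb.mul_pow_of_le (fun n => by positivity) (norm_nonneg z) hzr.le
  have hAz : Summable fun n : ℕ => ‖b n‖ * ‖z‖ ^ (n + 2) :=
    hBz.of_natCast_add_two_mul (fun n => norm_nonneg _) (norm_nonneg z)
  have hnum : z * (z * deriv H z + H z) = ∑' n : ℕ, ((n : 𝕜) + 2) * b n * z ^ (n + 2) := by
    rw [mul_deriv_add_eq_tsum hb' hz hzr hH, ← tsum_mul_left]
    exact tsum_congr fun n => by ring
  have hden : z * H z = 1 + ∑' n : ℕ, b n * z ^ (n + 2) := by
    rw [hH.eq_of_nhds, mul_add, mul_inv_cancel₀ hz, ← tsum_mul_left]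
    exact congrArg _ (tsum_congr fun n => by ring)
  have hv : ‖∑' n : ℕ, b n * z ^ (n + 2)‖ ≤ ∑' n : ℕ, ‖b n‖ * ‖z‖ ^ (n + 2) :=
    tsum_of_norm_bounded hAz.hasSum fun n => by rw [norm_mul, norm_pow]
  have hu : ‖∑' n : ℕ, ((n : 𝕜) + 2) * b n * z ^ (n + 2)‖ ≤
      ∑' n : ℕ, ((n : ℝ) + 2) * ‖b n‖ * ‖z‖ ^ (n + 2) :=
    tsum_of_norm_bounded hBz.hasSum fun n => by
      have hn : ‖(n : 𝕜) + 2‖ = (n : ℝ) + 2 := by norm_cast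
      rw [norm_mul, norm_mul, norm_pow, hn]
  have hHz : H z ≠ 0 := by
    intro h
    rw [h, mul_zero, eq_comm, add_eq_zero_iff_eq_neg'] at hden
    rw [hden, norm_neg, norm_one] at hv
    linarith
  have hquot : z * deriv H z / H z + 1 = z * (z * deriv H z + H z) / (z * H z) := by
    rw [mul_div_mul_left _ _ hz, add_div, div_self hHz]
  rw [hquot, hnum, hden]
  exact norm_div_one_add_le hu hv hA

end PowerSeries

theorem stmt_7_general (c : ℕ → ℂ) (r ρ : ℝ) (hr1 : r < 1)
    (hρ1 : ρ < 1)
    (hsum : Summable (fun n : ℕ => ((n : ℝ) + 2) * ‖c (n + 1)‖ * r ^ (n + 2)))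
    (hS : ∑' n : ℕ, ‖c (n + 1)‖ * r ^ (n + 2) < 1)
    (H : ℂ → ℂ)
    (hH : ∀ z : ℂ, 0 < ‖z‖ → ‖z‖ < 1 →
      H z = 1 / z + ∑' n : ℕ, c (n + 1) * z ^ (n + 1))
    (hcoef : ∑' n : ℕ, ((n : ℝ) + 3 - ρ) * ‖c (n + 1)‖ * r ^ (n + 2) ≤ 1 - ρ) :
    ∀ z : ℂ, 0 < ‖z‖ → ‖z‖ < r →
      ‖z * deriv H z / H z + 1‖ ≤ 1 - ρ := by
  intro z hz0 hzr
  have hz : z ≠ 0 := norm_pos_iff.1 hz0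
  have hr : 0 ≤ r := hz0.le.trans hzr.le
  have hHnear : H =ᶠ[𝓝 z] fun x => x⁻¹ + ∑' n, c (n + 1) * x ^ (n + 1) := by
    filter_upwards [eventually_ne_nhds hz,
      Metric.isOpen_ball.mem_nhds (mem_ball_zero_iff.2 (hzr.trans hr1))] with x hx0 hx1
    rw [hH x (norm_pos_iff.2 hx0) (mem_ball_zero_iff.1 hx1), one_div]
  have hA : Summable fun n : ℕ => ‖c (n + 1)‖ * r ^ (n + 2) :=
    hsum.of_natCast_add_two_mul (fun n => norm_nonneg _) hr
  have hAz : ∑' n : ℕ, ‖c (n + 1)‖ * ‖z‖ ^ (n + 2) ≤ ∑' n : ℕ, ‖c (n + 1)‖ * r ^ (n + 2) :=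
    tsum_mul_pow_le_of_le hA (fun n => norm_nonneg _) hz0.le hzr.le
  have hBz := tsum_mul_pow_le_of_le hsum (fun n => by positivity) hz0.le hzr.le
  have hsplit : ∑' n : ℕ, ((n : ℝ) + 3 - ρ) * ‖c (n + 1)‖ * r ^ (n + 2) =
      ∑' n : ℕ, ((n : ℝ) + 2) * ‖c (n + 1)‖ * r ^ (n + 2) +
        (1 - ρ) * ∑' n : ℕ, ‖c (n + 1)‖ * r ^ (n + 2) := by
    rw [← tsum_mul_left, ← hsum.tsum_add (hA.mul_left _)]
    exact tsum_congr fun n => by ring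
  refine (norm_mul_deriv_div_add_one_le hsum hz hzr hHnear (hAz.trans_lt hS)).trans ?_
  rw [div_le_iff₀ (sub_pos.2 (hAz.trans_lt hS))]
  linarith [mul_le_mul_of_nonneg_left hAz (sub_nonneg.2 hρ1.le)]

theorem stmt_7 (c : ℕ → ℂ) (r ρ : ℝ) (hr0 : 0 < r) (hr1 : r < 1)
    (hρ0 : 0 ≤ ρ) (hρ1 : ρ < 1)
    (hsum : Summable (fun n : ℕ => ((n : ℝ) + 2) * ‖c (n + 1)‖ * r ^ (n + 2)))
    (hS : ∑' n : ℕ, ‖c (n + 1)‖ * r ^ (n + 2) < 1)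
    (H : ℂ → ℂ)
    (hH : ∀ z : ℂ, 0 < ‖z‖ → ‖z‖ < 1 →
      H z = 1 / z + ∑' n : ℕ, c (n + 1) * z ^ (n + 1))
    (hcoef : ∑' n : ℕ, ((n : ℝ) + 3 - ρ) * ‖c (n + 1)‖ * r ^ (n + 2) ≤ 1 - ρ) :
    ∀ z : ℂ, 0 < ‖z‖ → ‖z‖ < r →
      ‖z * deriv H z / H z + 1‖ ≤ 1 - ρ :=
  stmt_7_general c r ρ hr1 hρ1 hsum hS H hH hcoef
end

section
/- Let H(z) = 1/z + Σ_{n≥1} cₙ zⁿ be analytic on the punctured unit disk with Σ_{n≥1} n|cₙ| r^{n+1} < 1 for some 0 < r < 1, and let 0 ≤ ρ < 1. If Σ_{n≥1} n(n+2−ρ)|cₙ| r^{n+1} ≤ 1 − ρ, then for all z with 0 < |z| < r, |z H''(z)/H'(z) + 2| ≤ 1 − ρ. -/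
/-!
Put `P z = z ^ 2 * H' z = -1 + ∑ n cₙ zⁿ⁺¹`. Then `H' = P / z ^ 2`, so `z H'' + 2 H' = P' / z`
and `z H'' / H' + 2 = z P' / P`. For `|z| < r` we have `|z P'| ≤ ∑ n (n + 1) |cₙ| rⁿ⁺¹ = T`
and `|P| ≥ 1 - ∑ n |cₙ| rⁿ⁺¹ = 1 - S > 0`, while the coefficient condition says exactly
`T + (1 - ρ) S ≤ 1 - ρ`, i.e. `T ≤ (1 - ρ) (1 - S)`.
-/

open Filter Topology

theorem Summable.mul_pow_add_of_le {K : Type*} [NormedField K] {u : ℕ → K} {r : K} (hr : r ≠ 0)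
    {j k : ℕ} (hjk : j ≤ k)
    (h : Summable fun n => u n * r ^ (n + k)) : Summable fun n => u n * r ^ (n + j) := by
  obtain ⟨m, rfl⟩ := Nat.exists_eq_add_of_le hjk
  refine (h.div_const (r ^ m)).congr fun n => ?_
  rw [← add_assoc, pow_add]
  field_simp

section PowerSeries

variable {𝕜 : Type*} [RCLike 𝕜] {b : ℕ → 𝕜} {r : ℝ} {z : 𝕜}

theorem norm_tsum_mul_pow_le (e : ℕ → ℕ) (hb : Summable fun n => ‖b n‖ * r ^ e n)
    (hz : ‖z‖ ≤ r) : ‖∑' n, b n * z ^ e n‖ ≤ ∑' n, ‖b n‖ * r ^ e n :=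
  tsum_of_norm_bounded hb.hasSum fun n => by
    rw [norm_mul, norm_pow]
    gcongr

theorem hasDerivAt_tsum_mul_pow_add_one (k : ℕ)
    (hb : Summable fun n => ((n + k + 1 : ℕ) : ℝ) * ‖b n‖ * r ^ (n + k))
    (hz : ‖z‖ < r) :
    HasDerivAt (fun w => ∑' n, b n * w ^ (n + k + 1))
      (∑' n, ((n + k + 1 : ℕ) : 𝕜) * b n * z ^ (n + k)) z := by
  refine hasDerivAt_tsum_of_isPreconnected (g := fun n w => b n * w ^ (n + k + 1))
    (g' := fun n w => ((n + k + 1 : ℕ) : 𝕜) * b n * w ^ (n + k)) hb Metric.isOpen_ball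
    (convex_ball (0 : 𝕜) r).isPreconnected (fun n w _ => ?_) (fun n w hw => ?_)
    (Metric.mem_ball_self ((norm_nonneg z).trans_lt hz)) (by simp) (mem_ball_zero_iff.mpr hz)
  · refine ((hasDerivAt_pow (n + k + 1) w).const_mul (b n)).congr_deriv ?_
    rw [Nat.add_sub_cancel]
    ring
  · rw [mem_ball_zero_iff] at hw
    rw [norm_mul, norm_mul, norm_pow, RCLike.norm_natCast]
    gcongr

end PowerSeries

theorem mul_deriv_deriv_div_deriv_add_two {𝕜 : Type*} [NontriviallyNormedField 𝕜]
    {F P : 𝕜 → 𝕜} {P' z : 𝕜} (hz : z ≠ 0) (hPz : P z ≠ 0) (hP : HasDerivAt P P' z)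
    (hF : deriv F =ᶠ[𝓝 z] fun w => P w / w ^ 2) :
    z * deriv (deriv F) z / deriv F z + 2 = z * P' / P z := by
  have h2 : HasDerivAt (fun w => P w / w ^ 2)
      ((P' * z ^ 2 - P z * (2 * z)) / (z ^ 2) ^ 2) z := by
    simpa using hP.fun_div (hasDerivAt_pow 2 z) (pow_ne_zero 2 hz)
  rw [hF.deriv_eq, h2.deriv, hF.eq_of_nhds]
  field_simp
  ring

section LaurentSeries

variable {c : ℕ → ℂ} {r : ℝ} {z : ℂ}

theorem deriv_eventuallyEq_div_sq {H : ℂ → ℂ}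
    (hc : Summable fun n : ℕ => ((n : ℝ) + 1) * ‖c (n + 1)‖ * r ^ n)
    (hH : ∀ w : ℂ, 0 < ‖w‖ → ‖w‖ < r →
      H w = 1 / w + ∑' n : ℕ, c (n + 1) * w ^ (n + 1))
    (hz0 : z ≠ 0) (hzr : ‖z‖ < r) :
    deriv H =ᶠ[𝓝 z]
      fun w => (-1 + ∑' n : ℕ, ((n + 1 : ℕ) : ℂ) * c (n + 1) * w ^ (n + 1 + 1)) / w ^ 2 := by
  have hV : IsOpen {w : ℂ | w ≠ 0 ∧ ‖w‖ < r} :=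
    isOpen_ne.inter (isOpen_lt continuous_norm continuous_const)
  filter_upwards [hV.mem_nhds ⟨hz0, hzr⟩] with w ⟨hw0, hwr⟩
  have hHw : H =ᶠ[𝓝 w] fun w => w⁻¹ + ∑' n : ℕ, c (n + 1) * w ^ (n + 1) := by
    filter_upwards [hV.mem_nhds ⟨hw0, hwr⟩] with y ⟨hy0, hyr⟩
    rw [hH y (norm_pos_iff.mpr hy0) hyr, one_div]
  have hf := hasDerivAt_tsum_mul_pow_add_one (b := fun n => c (n + 1)) 0
    (hc.congr fun n => by push_cast; ring) hwr
  simp only [add_zero] at hf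
  rw [hHw.deriv_eq, ((hasDerivAt_inv hw0).fun_add hf).deriv]
  have hsq : ∑' n : ℕ, ((n + 1 : ℕ) : ℂ) * c (n + 1) * w ^ (n + 1 + 1)
      = w ^ 2 * ∑' n : ℕ, ((n + 1 : ℕ) : ℂ) * c (n + 1) * w ^ n := by
    rw [← tsum_mul_left]
    exact tsum_congr fun n => by ring
  rw [hsq]
  field_simp

theorem hasDerivAt_neg_one_add_tsum
    (hc : Summable fun n : ℕ =>
      ((n : ℝ) + 1) * ((n : ℝ) + 2) * ‖c (n + 1)‖ * r ^ (n + 1))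
    (hz : ‖z‖ < r) :
    HasDerivAt (fun w => -1 + ∑' n : ℕ, ((n + 1 : ℕ) : ℂ) * c (n + 1) * w ^ (n + 1 + 1))
      (∑' n : ℕ, ((n + 1 + 1 : ℕ) : ℂ) * (((n + 1 : ℕ) : ℂ) * c (n + 1)) * z ^ (n + 1))
      z := by
  refine (hasDerivAt_tsum_mul_pow_add_one 1 (hc.congr fun n => ?_) hz).const_add (-1)
  rw [norm_mul, Complex.norm_natCast]
  push_cast
  ring

theorem one_sub_tsum_le_norm_neg_one_add_tsum
    (hc : Summable fun n : ℕ => ((n : ℝ) + 1) * ‖c (n + 1)‖ * r ^ (n + 2))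
    (hz : ‖z‖ ≤ r) :
    1 - ∑' n : ℕ, ((n : ℝ) + 1) * ‖c (n + 1)‖ * r ^ (n + 2)
      ≤ ‖-1 + ∑' n : ℕ, ((n + 1 : ℕ) : ℂ) * c (n + 1) * z ^ (n + 1 + 1)‖ := by
  have hnorm (n : ℕ) : ‖((n + 1 : ℕ) : ℂ) * c (n + 1)‖ * r ^ (n + 1 + 1)
      = ((n : ℝ) + 1) * ‖c (n + 1)‖ * r ^ (n + 2) := by
    rw [norm_mul, Complex.norm_natCast]
    push_cast
    ring
  have hb := norm_tsum_mul_pow_le (fun n => n + 1 + 1)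
    (hc.congr fun n => (hnorm n).symm) hz
  rw [tsum_congr hnorm] at hb
  calc 1 - ∑' n : ℕ, ((n : ℝ) + 1) * ‖c (n + 1)‖ * r ^ (n + 2)
      ≤ ‖(-1 : ℂ)‖ - ‖∑' n : ℕ, ((n + 1 : ℕ) : ℂ) * c (n + 1) * z ^ (n + 1 + 1)‖ := by
        rw [norm_neg, norm_one]
        exact sub_le_sub_left hb 1
    _ ≤ _ := norm_sub_le_norm_add _ _

theorem norm_mul_tsum_le
    (hc : Summable fun n : ℕ =>
      ((n : ℝ) + 1) * ((n : ℝ) + 2) * ‖c (n + 1)‖ * r ^ (n + 2))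
    (hz : ‖z‖ ≤ r) :
    ‖z * ∑' n : ℕ, ((n + 1 + 1 : ℕ) : ℂ) * (((n + 1 : ℕ) : ℂ) * c (n + 1)) * z ^ (n + 1)‖
      ≤ ∑' n : ℕ, ((n : ℝ) + 1) * ((n : ℝ) + 2) * ‖c (n + 1)‖ * r ^ (n + 2) := by
  have hnorm (n : ℕ) :
      ‖((n + 1 + 1 : ℕ) : ℂ) * (((n + 1 : ℕ) : ℂ) * c (n + 1))‖ * r ^ (n + 2)
        = ((n : ℝ) + 1) * ((n : ℝ) + 2) * ‖c (n + 1)‖ * r ^ (n + 2) := by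
    rw [norm_mul, norm_mul, Complex.norm_natCast, Complex.norm_natCast]
    push_cast
    ring
  have hb := norm_tsum_mul_pow_le (fun n => n + 2) (hc.congr fun n => (hnorm n).symm) hz
  rw [tsum_congr hnorm] at hb
  rw [← tsum_mul_left]
  refine le_of_eq_of_le (congrArg _ (tsum_congr fun n => ?_)) hb
  ring

end LaurentSeries

open Complex

theorem stmt_8_general (c : ℕ → ℂ) (r ρ : ℝ) (hr1 : r < 1)
    (hsum : Summable (fun n : ℕ => ((n : ℝ) + 1) * ((n : ℝ) + 3) * ‖c (n + 1)‖ * r ^ (n + 2)))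
    (hS : ∑' n : ℕ, ((n : ℝ) + 1) * ‖c (n + 1)‖ * r ^ (n + 2) < 1)
    (H : ℂ → ℂ)
    (hH : ∀ z : ℂ, 0 < ‖z‖ → ‖z‖ < 1 →
      H z = 1 / z + ∑' n : ℕ, c (n + 1) * z ^ (n + 1))
    (hcoef : ∑' n : ℕ, ((n : ℝ) + 1) * ((n : ℝ) + 3 - ρ) * ‖c (n + 1)‖ * r ^ (n + 2) ≤ 1 - ρ) :
    ∀ z : ℂ, 0 < ‖z‖ → ‖z‖ < r →
      ‖z * deriv (deriv H) z / deriv H z + 2‖ ≤ 1 - ρ := by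
  intro z hz0 hzr
  have hr0 : 0 < r := hz0.trans hzr
  have hSsum : Summable fun n : ℕ => ((n : ℝ) + 1) * ‖c (n + 1)‖ * r ^ (n + 2) :=
    hsum.of_nonneg_of_le (fun n => by positivity) fun n => by
      gcongr ?_ * _ * _
      exact le_mul_of_one_le_right (by positivity) (by linarith)
  have hTsum : Summable fun n : ℕ =>
      ((n : ℝ) + 1) * ((n : ℝ) + 2) * ‖c (n + 1)‖ * r ^ (n + 2) :=
    hsum.of_nonneg_of_le (fun n => by positivity) fun n => by gcongr; norm_num
  set S := ∑' n : ℕ, ((n : ℝ) + 1) * ‖c (n + 1)‖ * r ^ (n + 2)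
  set T := ∑' n : ℕ, ((n : ℝ) + 1) * ((n : ℝ) + 2) * ‖c (n + 1)‖ * r ^ (n + 2)
  have hT0 : 0 ≤ T := tsum_nonneg fun n => by positivity
  have hTS : T + (1 - ρ) * S ≤ 1 - ρ := by
    rw [← tsum_mul_left, ← hTsum.tsum_add (hSsum.mul_left _)]
    exact (tsum_congr fun n => by ring).trans_le hcoef
  have hP_ge := one_sub_tsum_le_norm_neg_one_add_tsum hSsum hzr.le
  have hP_pos : 0 < 1 - S := sub_pos.mpr hS
  have hzP'_le := norm_mul_tsum_le hTsum hzr.le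
  have hderivH := deriv_eventuallyEq_div_sq (hSsum.mul_pow_add_of_le hr0.ne' (j := 0) (by norm_num))
    (fun w hw0 hwr => hH w hw0 (hwr.trans hr1)) (norm_pos_iff.mp hz0) hzr
  have hP' := hasDerivAt_neg_one_add_tsum
    (hTsum.mul_pow_add_of_le hr0.ne' (j := 1) (by norm_num)) hzr
  rw [mul_deriv_deriv_div_deriv_add_two (norm_pos_iff.mp hz0)
    (norm_pos_iff.mp (hP_pos.trans_le hP_ge)) hP' hderivH, norm_div,
    div_le_iff₀ (hP_pos.trans_le hP_ge)]
  nlinarith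

theorem stmt_8 (c : ℕ → ℂ) (r ρ : ℝ) (hr0 : 0 < r) (hr1 : r < 1)
    (hρ0 : 0 ≤ ρ) (hρ1 : ρ < 1)
    (hsum : Summable (fun n : ℕ => ((n : ℝ) + 1) * ((n : ℝ) + 3) * ‖c (n + 1)‖ * r ^ (n + 2)))
    (hS : ∑' n : ℕ, ((n : ℝ) + 1) * ‖c (n + 1)‖ * r ^ (n + 2) < 1)
    (H : ℂ → ℂ)
    (hH : ∀ z : ℂ, 0 < ‖z‖ → ‖z‖ < 1 →
      H z = 1 / z + ∑' n : ℕ, c (n + 1) * z ^ (n + 1))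
    (hcoef : ∑' n : ℕ, ((n : ℝ) + 1) * ((n : ℝ) + 3 - ρ) * ‖c (n + 1)‖ * r ^ (n + 2) ≤ 1 - ρ) :
    ∀ z : ℂ, 0 < ‖z‖ → ‖z‖ < r →
      ‖z * deriv (deriv H) z / deriv H z + 2‖ ≤ 1 - ρ :=
  stmt_8_general c r ρ hr1 hsum hS H hH hcoef
end
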